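/- Let ε > 0, C₁ > 0 be real numbers, let p₀, p₁ be real numbers, and let k > 0 satisfy exp(−k·2^{s−1}) < C₁ · ε · s^{p₁−p₀} for every integer s ≥ 1. Let (η_r)_{r ≥ 1} be a sequence of nonnegative real numbers such that C₁ · η₁ ≤ exp(−k) and such that, for every r ≥ 1, if η_r ≤ ε · r^{−p₀} then η_{r+1} ≤ C₁ · r^{2p₁} · (r+1)^{−p₁} · η_r². Then for every integer r ≥ 1 one has η_r ≤ ε · r^{−p₀} and C₁ · r^{p₁} · η_r ≤ exp(−k·2^{r−1}). -/
import Mathlib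


/-- the conditional quadratic iteration proceeds for all `r`: if
`exp(−k·2^{s−1}) < C₁·ε·s^{p₁−p₀}` for all `s ≥ 1`, `C₁·η₁ ≤ exp(−k)`, and whenever the
smallness condition `η_r ≤ ε·r^{−p₀}` holds one has
`η_{r+1} ≤ C₁·r^{2p₁}·(r+1)^{−p₁}·η_r²`, then for every `r ≥ 1` the smallness condition
holds and `C₁·r^{p₁}·η_r ≤ exp(−k·2^{r−1})`. -/
theorem statement8 (ε C₁ p₀ p₁ k : ℝ) (hε : 0 < ε) (hC₁ : 0 < C₁) (hk : 0 < k)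
    (hks : ∀ s : ℕ, 1 ≤ s → Real.exp (-k * 2 ^ (s - 1)) < C₁ * ε * (s : ℝ) ^ (p₁ - p₀))
    (η : ℕ → ℝ) (hη : ∀ r : ℕ, 1 ≤ r → 0 ≤ η r)
    (h1 : C₁ * η 1 ≤ Real.exp (-k))
    (hrec : ∀ r : ℕ, 1 ≤ r → η r ≤ ε * (r : ℝ) ^ (-p₀) →
      η (r + 1) ≤ C₁ * (r : ℝ) ^ (2 * p₁) * ((r : ℝ) + 1) ^ (-p₁) * (η r) ^ 2) :
    ∀ r : ℕ, 1 ≤ r →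
      η r ≤ ε * (r : ℝ) ^ (-p₀) ∧
      C₁ * (r : ℝ) ^ p₁ * η r ≤ Real.exp (-k * 2 ^ (r - 1)) := by
  -- smallness follows from the exponential bound
  have small : ∀ r : ℕ, 1 ≤ r →
      C₁ * (r : ℝ) ^ p₁ * η r ≤ Real.exp (-k * 2 ^ (r - 1)) →
      η r ≤ ε * (r : ℝ) ^ (-p₀) := by
    intro r hr h2
    have hrpos : (0:ℝ) < (r : ℝ) := by exact_mod_cast hr
    have hlt : C₁ * (r : ℝ) ^ p₁ * η r < C₁ * ε * (r : ℝ) ^ (p₁ - p₀) :=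
      lt_of_le_of_lt h2 (hks r hr)
    have hsplit : (r : ℝ) ^ (p₁ - p₀) = (r : ℝ) ^ p₁ * (r : ℝ) ^ (-p₀) := by
      rw [← Real.rpow_add hrpos]; ring_nf
    rw [hsplit] at hlt
    have hp : (0:ℝ) < (r : ℝ) ^ p₁ := Real.rpow_pos_of_pos hrpos p₁
    nlinarith [mul_pos hC₁ hp]
  have key : ∀ r : ℕ, 1 ≤ r → C₁ * (r : ℝ) ^ p₁ * η r ≤ Real.exp (-k * 2 ^ (r - 1)) := by
    intro r hr
    induction r with
    | zero => omega
    | succ n ih =>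
      rcases Nat.lt_or_ge 1 (n + 1) with h | h
      · have hn : 1 ≤ n := by omega
        have ihn := ih hn
        have hsm := small n hn ihn
        have hrec' := hrec n hn hsm
        have hnpos : (0:ℝ) < (n : ℝ) := by exact_mod_cast hn
        have hn1pos : (0:ℝ) < (n : ℝ) + 1 := by positivity
        have hηn : 0 ≤ η n := hη n hn
        have hηn1 : 0 ≤ η (n + 1) := hη (n + 1) (by omega)
        -- rewrite the powers
        have h2p : (n : ℝ) ^ (2 * p₁) = ((n : ℝ) ^ p₁) ^ 2 := by
          rw [← Real.rpow_natCast ((n : ℝ) ^ p₁) 2, ← Real.rpow_mul hnpos.le]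
          norm_num [mul_comm]
        have hinv : ((n : ℝ) + 1) ^ p₁ * ((n : ℝ) + 1) ^ (-p₁) = 1 := by
          rw [← Real.rpow_add hn1pos]; simp
        have hppos : (0:ℝ) < ((n : ℝ) + 1) ^ p₁ := Real.rpow_pos_of_pos hn1pos p₁
        have hnp : (0:ℝ) < (n : ℝ) ^ p₁ := Real.rpow_pos_of_pos hnpos p₁
        -- step: C₁ * (n+1)^p₁ * η(n+1) ≤ (C₁ * n^p₁ * η n)^2
        have step : C₁ * ((n : ℝ) + 1) ^ p₁ * η (n + 1) ≤ (C₁ * (n : ℝ) ^ p₁ * η n) ^ 2 := by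
          have := mul_le_mul_of_nonneg_left hrec' (le_of_lt (mul_pos hC₁ hppos))
          calc C₁ * ((n : ℝ) + 1) ^ p₁ * η (n + 1)
              ≤ C₁ * ((n : ℝ) + 1) ^ p₁ *
                (C₁ * (n : ℝ) ^ (2 * p₁) * ((n : ℝ) + 1) ^ (-p₁) * η n ^ 2) := by
                exact mul_le_mul_of_nonneg_left hrec' (le_of_lt (mul_pos hC₁ hppos))
            _ = (C₁ * (n : ℝ) ^ p₁ * η n) ^ 2 *
                (((n : ℝ) + 1) ^ p₁ * ((n : ℝ) + 1) ^ (-p₁)) := by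
                rw [h2p]; ring
            _ = (C₁ * (n : ℝ) ^ p₁ * η n) ^ 2 := by rw [hinv, mul_one]
        have hsq : (C₁ * (n : ℝ) ^ p₁ * η n) ^ 2 ≤ Real.exp (-k * 2 ^ (n - 1)) ^ 2 := by
          have h0 : 0 ≤ C₁ * (n : ℝ) ^ p₁ * η n := by positivity
          exact pow_le_pow_left₀ h0 ihn 2
        have hexp : Real.exp (-k * 2 ^ (n - 1)) ^ 2 = Real.exp (-k * 2 ^ (n + 1 - 1)) := by
          rw [← Real.exp_nat_mul]
          congr 1
          have : n + 1 - 1 = (n - 1) + 1 := by omega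
          rw [this, pow_succ]
          ring
        push_cast
        calc C₁ * ((n : ℝ) + 1) ^ p₁ * η (n + 1)
            ≤ (C₁ * (n : ℝ) ^ p₁ * η n) ^ 2 := step
          _ ≤ Real.exp (-k * 2 ^ (n - 1)) ^ 2 := hsq
          _ = Real.exp (-k * 2 ^ (n + 1 - 1)) := hexp
      · have hn : n = 0 := by omega
        subst hn
        simpa using h1
  intro r hr
  exact ⟨small r hr (key r hr), key r hr⟩
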